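/- Let λ(s) = (1-s)λ + sμ·𝟙 for s ∈ [0,1], where λ ∈ Γ_m, μ > 0, and 𝟙 = (1,...,1). Then S_m(λ(s)) = Σ_{p=0}^{m} binomial(n-p, m-p) (1-s)^p (μs)^{m-p} S_p(λ) > 0 for all s ∈ [0,1]; in particular λ(s) ∈ Γ_m for all s ∈ [0,1]. -/

import Mathlib

/-- The `m`-th elementary symmetric polynomial of `l : Fin n → ℝ`. -/
noncomputable def esymm (n m : ℕ) (l : Fin n → ℝ) : ℝ :=
  ∑ s ∈ Finset.univ.powersetCard m, ∏ i ∈ s, l i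

/-- The Garding cone `Γ_m`: the connected component of `{λ | S_m(λ) > 0}`
containing the positive cone (equivalently, containing the all-ones vector). -/
noncomputable def GardingCone (n m : ℕ) : Set (Fin n → ℝ) :=
  connectedComponentIn {l | 0 < esymm n m l} (fun _ => 1)

/-!
Expanding `∏ i ∈ A, (a * λ i + c)` over the `m`-subsets `A` and counting, for each `p`-subset `B`,
the `(n - p).choose (m - p)` sets `A ⊇ B` gives the formula. Its terms are nonnegative because
every `S_p` with `p ≤ m` is positive on `Γ_m`: the `(n - m)`-th derivative of `∏ i, (X + λ i)` is
real-rooted by Rolle's theorem and has the coefficients `S_m, …, S_0` up to positive factors; if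
these are `≥ 0` with `S_m > 0`, its roots are negative and Vieta makes every coefficient positive.
So `{∀ p ≤ m, S_p > 0}` is clopen in `{S_m > 0}`; as it contains `𝟙`, it contains `Γ_m`. One of
the extreme terms `(1 - s)^m S_m(λ)` and `n.choose m (μ s)^m` is positive, so the whole segment
from `λ` to `μ 𝟙` lies in `{S_m > 0}`, hence in the component `Γ_m` of `λ`.
-/

open Finset Polynomial

theorem Finset.sum_powersetCard_sum_powersetCard {α β : Type*} [AddCommMonoid β] (u : Finset α)
    {p m : ℕ} (hpm : p ≤ m) (f : Finset α → β) :
    ∑ s ∈ u.powersetCard m, ∑ t ∈ s.powersetCard p, f t =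
      (#u - p).choose (m - p) • ∑ t ∈ u.powersetCard p, f t := by
  classical
  rw [sum_comm' (t' := u.powersetCard p) (s' := fun t => (u.powersetCard m).filter (t ⊆ ·)),
    smul_sum]
  · refine sum_congr rfl fun t ht => ?_
    obtain ⟨htu, rfl⟩ := mem_powersetCard.1 ht
    rw [sum_const, card_filter_powersetCard_subset t u m htu hpm]
  · intro s t
    simp only [mem_powersetCard, mem_filter]
    constructor
    · rintro ⟨⟨hsu, hs⟩, hts, rfl⟩
      exact ⟨⟨⟨hsu, hs⟩, hts⟩, hts.trans hsu, rfl⟩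
    · rintro ⟨⟨⟨hsu, hs⟩, hts⟩, -, rfl⟩
      exact ⟨⟨hsu, hs⟩, hts, rfl⟩

theorem Multiset.esymm_pos {R : Type*} [CommSemiring R] [PartialOrder R] [IsStrictOrderedRing R]
    {s : Multiset R} (hs : ∀ x ∈ s, 0 < x) {k : ℕ} (hk : k ≤ Multiset.card s) :
    0 < s.esymm k := by
  obtain ⟨t, ht⟩ : ∃ t, t ∈ s.powersetCard k := by
    rw [← Multiset.card_pos_iff_exists_mem, Multiset.card_powersetCard]
    exact Nat.choose_pos hk
  have hts := (Multiset.mem_powersetCard.1 ht).1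
  refine (Multiset.prod_pos fun x hx => hs x (Multiset.mem_of_le hts hx)).trans_le ?_
  refine Multiset.single_le_sum (fun y hy => ?_) _ (Multiset.mem_map_of_mem _ ht)
  obtain ⟨u, hu, rfl⟩ := Multiset.mem_map.1 hy
  exact (Multiset.prod_pos fun x hx =>
    hs x (Multiset.mem_of_le (Multiset.mem_powersetCard.1 hu).1 hx)).le

namespace Polynomial

section

variable {F : Type*} [Field F] [LinearOrder F] [IsStrictOrderedRing F]

theorem coeff_pos_of_roots_neg {p : F[X]} (hp : p.Splits) (hlead : 0 < p.leadingCoeff)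
    (hroots : ∀ r ∈ p.roots, r < 0) {k : ℕ} (hk : k ≤ p.natDegree) : 0 < p.coeff k := by
  rw [coeff_eq_esymm_roots_of_splits hp hk, mul_assoc, ← Multiset.esymm_neg]
  refine mul_pos hlead (Multiset.esymm_pos (fun x hx => ?_) ?_)
  · obtain ⟨r, hr, rfl⟩ := Multiset.mem_map.1 hx
    exact neg_pos.2 (hroots r hr)
  · rw [Multiset.card_map, splits_iff_card_roots.1 hp]
    omega

theorem eval_pos_of_coeff_nonneg {p : F[X]} (hnonneg : ∀ j, 0 ≤ p.coeff j) (h0 : 0 < p.coeff 0)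
    {x : F} (hx : 0 ≤ x) : 0 < p.eval x := by
  rw [eval_eq_sum_range]
  exact sum_pos' (fun j _ => mul_nonneg (hnonneg j) (pow_nonneg hx j))
    ⟨0, by simp, by simpa using h0⟩

theorem coeff_pos_of_splits_of_coeff_nonneg {p : F[X]} (hp : p.Splits)
    (hnonneg : ∀ j, 0 ≤ p.coeff j) (h0 : 0 < p.coeff 0) {k : ℕ} (hk : k ≤ p.natDegree) :
    0 < p.coeff k := by
  have hp0 : p ≠ 0 := fun h => by simp [h] at h0
  refine coeff_pos_of_roots_neg hp ((hnonneg _).lt_of_ne' (leadingCoeff_ne_zero.2 hp0))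
    (fun r hr => ?_) hk
  by_contra! hr0
  exact (eval_pos_of_coeff_nonneg hnonneg h0 hr0).ne' (isRoot_of_mem_roots hr)

end

theorem Splits.derivative {p : ℝ[X]} (hp : p.Splits) : p.derivative.Splits := by
  rw [splits_iff_card_roots] at hp ⊢
  have := card_roots_le_derivative p
  have := natDegree_derivative_le p
  have := p.derivative.card_roots'
  omega

theorem Splits.iterate_derivative {p : ℝ[X]} (hp : p.Splits) (k : ℕ) :
    (Polynomial.derivative^[k] p).Splits := by
  induction k with
  | zero => exact hp
  | succ k ih => rw [Function.iterate_succ_apply']; exact ih.derivative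

end Polynomial

theorem esymm_zero (n : ℕ) (l : Fin n → ℝ) : esymm n 0 l = 1 := by
  simp [esymm]

theorem esymm_const_one (n m : ℕ) : esymm n m (fun _ => 1) = n.choose m := by
  simp [esymm]

theorem continuous_esymm (n p : ℕ) : Continuous (esymm n p) :=
  continuous_finsetSum _ fun _ _ => continuous_finsetProd _ fun i _ => continuous_apply i

theorem esymm_mul_add_const (n m : ℕ) (a c : ℝ) (l : Fin n → ℝ) :
    esymm n m (fun i => a * l i + c) =
      ∑ p ∈ range (m + 1), ((n - p).choose (m - p) : ℝ) * a ^ p * c ^ (m - p) * esymm n p l := by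
  classical
  calc esymm n m (fun i => a * l i + c)
      = ∑ s ∈ univ.powersetCard m, ∑ p ∈ range (m + 1), ∑ t ∈ s.powersetCard p,
          a ^ p * c ^ (m - p) * ∏ i ∈ t, l i := by
        refine sum_congr rfl fun s hs => ?_
        obtain ⟨-, hs⟩ := mem_powersetCard.1 hs
        rw [prod_add, sum_powerset, hs]
        refine sum_congr rfl fun p _ => sum_congr rfl fun t ht => ?_
        obtain ⟨hts, rfl⟩ := mem_powersetCard.1 ht
        rw [prod_const, card_sdiff_of_subset hts, hs, prod_mul_distrib, prod_const]
        ring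
    _ = ∑ p ∈ range (m + 1), ∑ s ∈ univ.powersetCard m, ∑ t ∈ s.powersetCard p,
          a ^ p * c ^ (m - p) * ∏ i ∈ t, l i := sum_comm
    _ = _ := by
        refine sum_congr rfl fun p hp => ?_
        rw [sum_powersetCard_sum_powersetCard _ (Nat.lt_succ_iff.1 (mem_range.1 hp)), ← mul_sum,
          card_univ, Fintype.card_fin, nsmul_eq_mul, esymm]
        ring

theorem esymm_pos_of_nonneg {n m : ℕ} (hmn : m ≤ n) {l : Fin n → ℝ}
    (hnonneg : ∀ p ≤ m, 0 ≤ esymm n p l) (hm : 0 < esymm n m l) {p : ℕ} (hp : p ≤ m) :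
    0 < esymm n p l := by
  set P : ℝ[X] := ∏ i, (X + C (l i))
  have hP : P.natDegree = n := by
    simp [P, natDegree_prod_of_monic _ _ fun i _ => monic_X_add_C (l i)]
  have hPsplits : P.Splits := Splits.prod fun i _ => Splits.X_add_C (l i)
  have hcoeffP : ∀ k ≤ n, P.coeff k = esymm n (n - k) l := fun k hk => by
    rw [prod_X_add_C_coeff _ _ (by simpa using hk), card_univ, Fintype.card_fin]
    rfl
  set Q := derivative^[n - m] P
  have hdesc : ∀ j, (0 : ℝ) < (j + (n - m)).descFactorial (n - m) := fun j =>
    Nat.cast_pos.2 (Nat.descFactorial_pos.2 (by omega))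
  have hcoeffQ : ∀ j ≤ m, Q.coeff j = (j + (n - m)).descFactorial (n - m) * esymm n (m - j) l :=
    fun j hj => by
      rw [coeff_iterate_derivative, nsmul_eq_mul, hcoeffP _ (by omega),
        show n - (j + (n - m)) = m - j by omega]
  have hQnonneg : ∀ j, 0 ≤ Q.coeff j := fun j => by
    rcases le_or_gt j m with hj | hj
    · rw [hcoeffQ j hj]
      exact mul_nonneg (hdesc j).le (hnonneg _ (by omega))
    · rw [coeff_iterate_derivative, coeff_eq_zero_of_natDegree_lt (by rw [hP]; omega), smul_zero]
  have hQm : 0 < Q.coeff m := by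
    rw [hcoeffQ m le_rfl, Nat.sub_self, esymm_zero, mul_one]
    exact hdesc m
  have hQ0 : 0 < Q.coeff 0 := by
    rw [hcoeffQ 0 (Nat.zero_le m), Nat.sub_zero]
    exact mul_pos (hdesc 0) hm
  have hQp := coeff_pos_of_splits_of_coeff_nonneg (hPsplits.iterate_derivative (n - m)) hQnonneg
    hQ0 ((Nat.sub_le m p).trans (le_natDegree_of_ne_zero hQm.ne'))
  rw [hcoeffQ _ (Nat.sub_le m p), Nat.sub_sub_self hp] at hQp
  exact pos_of_mul_pos_right hQp (hdesc _).le

theorem esymm_pos_of_mem_gardingCone {n m : ℕ} (hmn : m ≤ n) {l : Fin n → ℝ}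
    (hl : l ∈ GardingCone n m) {p : ℕ} (hp : p ≤ m) : 0 < esymm n p l := by
  set V := {l : Fin n → ℝ | ∀ p ≤ m, 0 < esymm n p l}
  set W := {l : Fin n → ℝ | ∃ p ≤ m, esymm n p l < 0}
  have hV : IsOpen V := by
    simp only [V, Set.ofPred_forall]
    exact (Set.finite_le_nat m).isOpen_biInter fun p _ =>
      isOpen_lt continuous_const (continuous_esymm n p)
  have hW : IsOpen W := by
    simp only [W, ← exists_prop, Set.ofPred_exists]
    exact isOpen_biUnion fun p _ => isOpen_lt (continuous_esymm n p) continuous_const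
  have hVW : Disjoint V W := Set.disjoint_left.2 fun l hlV ⟨p, hp, hneg⟩ =>
    (hlV p hp).not_gt hneg
  have hcover : {l | 0 < esymm n m l} ⊆ V ∪ W := fun l hl => by
    by_cases hlW : l ∈ W
    · exact Or.inr hlW
    · simp only [W, Set.mem_ofPred_eq, not_exists, not_and, not_lt] at hlW
      exact Or.inl fun p hp => esymm_pos_of_nonneg hmn hlW hl hp
  have hone : (fun _ => (1 : ℝ)) ∈ V := fun p hp => by
    rw [esymm_const_one]
    exact Nat.cast_pos.2 (Nat.choose_pos (hp.trans hmn))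
  have hGV : GardingCone n m ⊆ V :=
    isPreconnected_connectedComponentIn.subset_left_of_subset_union hV hW hVW
      ((connectedComponentIn_subset _ _).trans hcover)
      ⟨_, mem_connectedComponentIn (hone m le_rfl), hone⟩
  exact hGV hl p hp

theorem esymm_mul_add_const_pos {n m : ℕ} (hmn : m ≤ n) {l : Fin n → ℝ}
    (hl : ∀ p ≤ m, 0 < esymm n p l) {a c : ℝ} (ha : 0 ≤ a) (hc : 0 ≤ c) (hac : 0 < a ∨ 0 < c) :
    0 < esymm n m (fun i => a * l i + c) := by
  rw [esymm_mul_add_const]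
  refine sum_pos' (fun p hp => ?_) ?_
  · have := (hl p (Nat.lt_succ_iff.1 (mem_range.1 hp))).le
    positivity
  · rcases hac with ha | hc
    · exact ⟨m, self_mem_range_succ m, by simpa using mul_pos (pow_pos ha m) (hl m le_rfl)⟩
    · refine ⟨0, by simp, ?_⟩
      simpa [esymm_zero] using mul_pos (Nat.cast_pos.2 (Nat.choose_pos hmn)) (pow_pos hc m)

theorem stmt12_general (n m : ℕ) (hmn : m ≤ n) (l : Fin n → ℝ)
    (hl : l ∈ GardingCone n m) (μ : ℝ) (hμ : 0 < μ) (s : ℝ)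
    (hs : s ∈ Set.Icc (0 : ℝ) 1) :
    esymm n m (fun i => (1 - s) * l i + s * μ) =
      ∑ p ∈ Finset.range (m + 1),
        (Nat.choose (n - p) (m - p) : ℝ) * (1 - s) ^ p * (μ * s) ^ (m - p) * esymm n p l ∧
    0 < esymm n m (fun i => (1 - s) * l i + s * μ) ∧
    (fun i => (1 - s) * l i + s * μ) ∈ GardingCone n m := by
  set γ : ℝ → Fin n → ℝ := fun σ i => (1 - σ) * l i + σ * μ
  have hγ : ∀ σ ∈ Set.Icc (0 : ℝ) 1, 0 < esymm n m (γ σ) := fun σ ⟨hσ0, hσ1⟩ =>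
    esymm_mul_add_const_pos hmn (fun p hp => esymm_pos_of_mem_gardingCone hmn hl hp)
      (sub_nonneg.2 hσ1) (by positivity)
      (hσ1.lt_or_eq.imp sub_pos.2 fun h => by simpa [h] using hμ)
  refine ⟨by simp_rw [esymm_mul_add_const, mul_comm s μ], hγ s hs, ?_⟩
  have hγ_cont : Continuous γ := by fun_prop
  rw [GardingCone, connectedComponentIn_eq hl]
  refine (isPreconnected_Icc.image γ hγ_cont.continuousOn).subset_connectedComponentIn
    ⟨0, ⟨le_rfl, zero_le_one⟩, by simp [γ]⟩ ?_ ⟨s, hs, rfl⟩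
  exact Set.image_subset_iff.2 hγ

theorem stmt12 (n m : ℕ) (hm : 1 ≤ m) (hmn : m ≤ n) (l : Fin n → ℝ)
    (hl : l ∈ GardingCone n m) (μ : ℝ) (hμ : 0 < μ) (s : ℝ)
    (hs : s ∈ Set.Icc (0 : ℝ) 1) :
    esymm n m (fun i => (1 - s) * l i + s * μ) =
      ∑ p ∈ Finset.range (m + 1),
        (Nat.choose (n - p) (m - p) : ℝ) * (1 - s) ^ p * (μ * s) ^ (m - p) * esymm n p l ∧
    0 < esymm n m (fun i => (1 - s) * l i + s * μ) ∧
    (fun i => (1 - s) * l i + s * μ) ∈ GardingCone n m :=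
  stmt12_general n m hmn l hl μ hμ s hs
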